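/- Let G' be a connected graph and x, v vertices of G' with N_{G'}[x] ⊆ N_{G'}[v]. Let T be a search tree on G = G' − x and let i be an integer with 0 ≤ i ≤ d_{T,v}. Then the tree T(i,x,v), obtained by inserting x at depth i along the root-to-v path of T, is a search tree on G'. -/

import Mathlib

open scoped Classical

universe u

variable {V : Type u}

/-- A rooted tree structure on a support set: data only, well-formedness is `RTree.WF`. -/
structure RTree (V : Type u) where
  supp : Set V
  root : V
  parent : V → Option V

namespace RTree

def parentRel (T : RTree V) (a b : V) : Prop := T.parent a = some b

/-- `u` is an ancestor of `v` in `T` (reflexively). -/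
def isAncestor (T : RTree V) (u v : V) : Prop :=
  Relation.ReflTransGen T.parentRel v u

def WF (T : RTree V) : Prop :=
  T.root ∈ T.supp ∧
  T.parent T.root = none ∧
  (∀ v, v ∉ T.supp → T.parent v = none) ∧
  (∀ v ∈ T.supp, v ≠ T.root → ∃ u ∈ T.supp, T.parent v = some u) ∧
  (∀ v ∈ T.supp, T.isAncestor T.root v)

/-- The vertex set of the subtree `T|c` rooted at `c`. -/
def descendants (T : RTree V) (c : V) : Set V :=
  {v | v ∈ T.supp ∧ T.isAncestor c v}

/-- Iterated parent. -/
def pIter (T : RTree V) : ℕ → V → Option V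
  | 0, w => some w
  | n + 1, w => (T.parent w).bind (T.pIter n)

/-- The depth `d_{T,v}` of `v` in `T` (distance to the root). -/
noncomputable def depthOf (T : RTree V) (v : V) : ℕ :=
  sInf {n | T.pIter n v = some T.root}

/-- The subtree of `T` rooted at `c`. -/
noncomputable def subtreeAt (T : RTree V) (c : V) : RTree V where
  supp := T.descendants c
  root := c
  parent := fun w => if w = c then none else if w ∈ T.descendants c then T.parent w else none

/-- The vertex at depth `i` on the path from the root to `v`. -/
noncomputable def ancAt (T : RTree V) (v : V) (i : ℕ) : V :=
  (T.pIter (T.depthOf v - i) v).getD T.root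

/-- Insertion `T(i,x,v)` of a new vertex `x` at depth `i` along the root-to-`v` path:
`i = 0` makes `x` the new root, `i = d_{T,v}+1` adds `x` as a new child of `v`, and
for `1 ≤ i ≤ d_{T,v}` the `i`-th edge of the root-to-`v` path is subdivided by `x`. -/
noncomputable def insertAt (T : RTree V) (i : ℕ) (x v : V) : RTree V :=
  if i = 0 then
    { supp := insert x T.supp
      root := x
      parent := fun w => if w = x then none else if w = T.root then some x else T.parent w }
  else if i = T.depthOf v + 1 then
    { supp := insert x T.supp
      root := T.root
      parent := fun w => if w = x then some v else T.parent w }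
  else
    { supp := insert x T.supp
      root := T.root
      parent := fun w =>
        if w = x then some (T.ancAt v (i - 1))
        else if w = T.ancAt v i then some x
        else T.parent w }

/-- Elimination `p(T,x)` of a vertex `x` (meaningful when `x` has at most one child). -/
noncomputable def elim (T : RTree V) (x : V) : RTree V where
  supp := T.supp \ {x}
  root :=
    if T.root = x then (if h : ∃ w, T.parent w = some x then h.choose else T.root) else T.root
  parent := fun w =>
    if w = x then none
    else if T.parent w = some x then T.parent x
    else T.parent w

end RTree

/-- Reachability inside the vertex set `s`, i.e. in the induced subgraph `G[s]`. -/
def reachWithin (G : SimpleGraph V) (s : Set V) : V → V → Prop :=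
  Relation.ReflTransGen (fun a b => a ∈ s ∧ b ∈ s ∧ G.Adj a b)

/-- Recursive definition of a search tree: the children of the root are the roots of
search trees on the connected components of the graph minus the root. -/
inductive IsSearchTreeRec {V : Type u} (G : SimpleGraph V) : RTree V → Prop
  | intro (T : RTree V) (hwf : T.WF)
      (hconn : ∀ a ∈ T.supp, ∀ b ∈ T.supp, reachWithin G T.supp a b)
      (hcomp : ∀ c, T.parent c = some T.root →
        ∀ w, w ∈ T.descendants c ↔
          (w ∈ T.supp ∧ w ≠ T.root ∧ reachWithin G (T.supp \ {T.root}) c w))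
      (hrec : ∀ c, T.parent c = some T.root → IsSearchTreeRec G (T.subtreeAt c)) :
      IsSearchTreeRec G T

/-- `T` is a search tree on the induced subgraph `G[s]`. -/
def IsSearchTreeOn (G : SimpleGraph V) (s : Set V) (T : RTree V) : Prop :=
  T.supp = s ∧ IsSearchTreeRec G T

/-- `T` is a search tree on `G`. -/
def IsSearchTree (G : SimpleGraph V) (T : RTree V) : Prop :=
  IsSearchTreeOn G Set.univ T

/-- The `uv`-rotation of `T` (for `v` a child of `u`): `u` becomes a child of `v`, `v` takes
`u`'s old parent, and each subtree `S` of `v` is reattached below `u` iff `u` has a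
`G`-neighbour in `S`. -/
noncomputable def rotate (G : SimpleGraph V) (T : RTree V) (u v : V) : RTree V where
  supp := T.supp
  root := if T.root = u then v else T.root
  parent := fun w =>
    if w = v then T.parent u
    else if w = u then some v
    else if T.parent w = some v then
      (if ∃ z ∈ T.descendants w, G.Adj u z then some u else some v)
    else T.parent w

def IsRotation (G : SimpleGraph V) (S S' : RTree V) : Prop :=
  ∃ u v, S.parent v = some u ∧ S' = rotate G S u v

def rotAdj (G : SimpleGraph V) (S S' : RTree V) : Prop :=
  S ≠ S' ∧ (IsRotation G S S' ∨ IsRotation G S' S)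

/-- The rotation graph of the induced subgraph `G[s]`: vertices are the search trees on
`G[s]`, two trees being adjacent iff they differ by a single rotation. -/
def rotationGraphOn (G : SimpleGraph V) (s : Set V) :
    SimpleGraph {T : RTree V // IsSearchTreeOn G s T} where
  Adj T T' := rotAdj G T.1 T'.1
  symm := ⟨fun T T' h => ⟨Ne.symm h.1, Or.symm h.2⟩⟩
  loopless := ⟨fun T h => h.1 rfl⟩

/-- A vertex of `K` of maximal depth in `T` (the vertex `v_{λ(T)}`). -/
noncomputable def deepestIn (T : RTree V) (K : Set V) : V :=
  if h : ∃ u, u ∈ K ∧ ∀ w ∈ K, T.depthOf w ≤ T.depthOf u then h.choose else T.root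

/-- `u` and `v` have different relative order in `T` and `T'`. -/
def diffRelOrder (T T' : RTree V) (u v : V) : Prop :=
  (T.isAncestor u v ∧ ¬ T'.isAncestor u v) ∨ (¬ T.isAncestor u v ∧ T'.isAncestor u v)

/-- The step from `S` to `S'` is a rotation of the pair `u`, `v`. -/
def isUVStep (G : SimpleGraph V) (u v : V) (S S' : RTree V) : Prop :=
  (S.parent v = some u ∧ S' = rotate G S u v) ∨ (S.parent u = some v ∧ S' = rotate G S v u)

/-- A threshold graph: obtainable from the one-vertex graph by repeatedly adding either an
isolated vertex or a universal vertex. -/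
def IsThresholdGraph {V : Type u} [Fintype V] (G : SimpleGraph V) : Prop :=
  ∃ e : Fin (Fintype.card V) ≃ V,
    ∀ i : Fin (Fintype.card V),
      (∀ j, j < i → ¬ G.Adj (e i) (e j)) ∨ (∀ j, j < i → G.Adj (e i) (e j))

/-- The complete split graph `SPK_{p,q}`: a clique of size `p` completely joined to an
independent set of size `q`. -/
def completeSplitGraph (p q : ℕ) : SimpleGraph (Fin p ⊕ Fin q) where
  Adj a b := a ≠ b ∧ (a.isLeft = true ∨ b.isLeft = true)
  symm := ⟨fun a b h => ⟨Ne.symm h.1, Or.symm h.2⟩⟩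
  loopless := ⟨fun a h => h.1 rfl⟩

/-!
A rooted tree is a search tree exactly when every subtree spans a connected subgraph and every
edge joins a vertex to one of its ancestors: peeling off the root, the subtrees of its children
are then precisely the components of the rest. Both properties survive inserting `x` between
`ancAt v i` and its parent (above the root when `i = 0`). A subtree gains `x` only if it already
contains `v`, a neighbour of `x`. A neighbour of `x` is `v` or a neighbour of `v`, hence an
ancestor or a descendant of `v`, so it lies above or below `x` on that path.
-/

open Relation

namespace RTree

variable {T : RTree V} {u w a b c v z : V}

theorem WF.root_mem (hT : T.WF) : T.root ∈ T.supp := hT.1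

theorem WF.parent_root (hT : T.WF) : T.parent T.root = none := hT.2.1

theorem WF.parent_eq_none (hT : T.WF) (hw : w ∉ T.supp) : T.parent w = none := hT.2.2.1 w hw

theorem WF.exists_parent (hT : T.WF) (hw : w ∈ T.supp) (hr : w ≠ T.root) :
    ∃ u ∈ T.supp, T.parent w = some u :=
  hT.2.2.2.1 w hw hr

theorem WF.root_isAncestor (hT : T.WF) (hw : w ∈ T.supp) : T.isAncestor T.root w :=
  hT.2.2.2.2 w hw

theorem WF.ne_root_of_parent_eq_some (hT : T.WF) (h : T.parent w = some u) : w ≠ T.root := by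
  rintro rfl
  simp [hT.parent_root] at h

theorem WF.mem_of_parent_eq_some (hT : T.WF) (h : T.parent w = some u) : w ∈ T.supp := by
  by_contra hw
  simp [hT.parent_eq_none hw] at h

theorem WF.parent_mem_of_parent_eq_some (hT : T.WF) (h : T.parent w = some u) : u ∈ T.supp := by
  obtain ⟨u', hu', hwu'⟩ :=
    hT.exists_parent (hT.mem_of_parent_eq_some h) (hT.ne_root_of_parent_eq_some h)
  rwa [Option.some_inj.1 (h.symm.trans hwu')]

theorem parentRel_rightUnique : Relator.RightUnique T.parentRel :=
  fun _ _ _ h h' => Option.some_injective _ (h.symm.trans h')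

theorem isAncestor_of_parent_eq_some (h : T.parent w = some u) : T.isAncestor u w :=
  ReflTransGen.single h

theorem isAncestor.trans (h₁ : T.isAncestor u w) (h₂ : T.isAncestor w z) : T.isAncestor u z :=
  ReflTransGen.trans h₂ h₁

theorem isAncestor_total (hu : T.isAncestor u w) (hc : T.isAncestor c w) :
    T.isAncestor u c ∨ T.isAncestor c u :=
  (ReflTransGen.total_of_right_unique parentRel_rightUnique hu hc).symm

theorem WF.mem_of_isAncestor (hT : T.WF) (hw : w ∈ T.supp) (h : T.isAncestor u w) :
    u ∈ T.supp := by
  induction h with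
  | refl => exact hw
  | tail _ hpar _ => exact hT.parent_mem_of_parent_eq_some hpar

theorem WF.eq_root_of_isAncestor_root (hT : T.WF) (h : T.isAncestor u T.root) : u = T.root := by
  rcases ReflTransGen.cases_head h with h | ⟨c, hc, -⟩
  · exact h.symm
  · simp [parentRel, hT.parent_root] at hc

theorem WF.isAncestor_antisymm (hT : T.WF) (hw : w ∈ T.supp) (h₁ : T.isAncestor u w)
    (h₂ : T.isAncestor w u) : u = w := by
  have hroot := hT.root_isAncestor hw
  clear hw
  induction hroot using ReflTransGen.head_induction_on generalizing u with
  | refl => exact hT.eq_root_of_isAncestor_root h₁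
  | @head w w' hww' _ ih =>
    rcases ReflTransGen.cases_head h₁ with rfl | ⟨c, hwc, hcu⟩
    · rfl
    obtain rfl : c = w' := parentRel_rightUnique hwc hww'
    obtain rfl : u = c := ih hcu (ReflTransGen.tail h₂ hww')
    exact (ih h₂ (ReflTransGen.single hww')).symm

theorem pIter_add (m n : ℕ) (w : V) :
    T.pIter (m + n) w = (T.pIter m w).bind (T.pIter n) := by
  induction m generalizing w with
  | zero => simp [pIter]
  | succ m ih =>
    rw [Nat.add_right_comm]
    cases h : T.parent w <;> simp [pIter, h, ih]

theorem isAncestor_iff_exists_pIter : T.isAncestor u w ↔ ∃ n, T.pIter n w = some u := by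
  constructor
  · intro h
    induction h using ReflTransGen.head_induction_on with
    | refl => exact ⟨0, rfl⟩
    | head hpar _ ih =>
      obtain ⟨n, hn⟩ := ih
      exact ⟨n + 1, by simp [pIter, show T.parent _ = some _ from hpar, hn]⟩
  · rintro ⟨n, hn⟩
    induction n generalizing w with
    | zero => exact (Option.some_inj.1 hn) ▸ ReflTransGen.refl
    | succ n ih =>
      cases h : T.parent w with
      | none => simp [pIter, h] at hn
      | some c => exact ReflTransGen.head h (ih (by simpa [pIter, h] using hn))

theorem WF.pIter_depthOf (hT : T.WF) (hv : v ∈ T.supp) :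
    T.pIter (T.depthOf v) v = some T.root :=
  Nat.sInf_mem (isAncestor_iff_exists_pIter.1 (hT.root_isAncestor hv))

theorem WF.pIter_depthOf_sub (hT : T.WF) (hv : v ∈ T.supp) {i : ℕ} (hi : i ≤ T.depthOf v) :
    T.pIter (T.depthOf v - i) v = some (T.ancAt v i) := by
  have hd := hT.pIter_depthOf hv
  rw [← Nat.sub_add_cancel hi, pIter_add] at hd
  unfold ancAt
  cases h : T.pIter (T.depthOf v - i) v <;> simp_all

theorem WF.ancAt_zero (hT : T.WF) (hv : v ∈ T.supp) : T.ancAt v 0 = T.root := by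
  simp [ancAt, hT.pIter_depthOf hv]

theorem WF.isAncestor_ancAt (hT : T.WF) (hv : v ∈ T.supp) {i : ℕ} (hi : i ≤ T.depthOf v) :
    T.isAncestor (T.ancAt v i) v :=
  isAncestor_iff_exists_pIter.2 ⟨_, hT.pIter_depthOf_sub hv hi⟩

theorem WF.parent_ancAt (hT : T.WF) (hv : v ∈ T.supp) {i : ℕ} (hi₀ : i ≠ 0)
    (hi : i ≤ T.depthOf v) : T.parent (T.ancAt v i) = some (T.ancAt v (i - 1)) := by
  have h := hT.pIter_depthOf_sub hv (i := i - 1) (by omega)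
  rw [show T.depthOf v - (i - 1) = T.depthOf v - i + 1 by omega, pIter_add,
    hT.pIter_depthOf_sub hv hi] at h
  cases hp : T.parent (T.ancAt v i) <;> simp_all [pIter]

theorem WF.descendants_root (hT : T.WF) : T.descendants T.root = T.supp :=
  Set.ext fun _ => ⟨And.left, fun hz => ⟨hz, hT.root_isAncestor hz⟩⟩

theorem WF.mem_descendants_of_parent_eq_some (hT : T.WF) (hz : z ∈ T.descendants c)
    (hzc : z ≠ c) (hp : T.parent z = some u) : u ∈ T.descendants c := by
  rcases ReflTransGen.cases_head hz.2 with h | ⟨u', hzu', hu'c⟩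
  · exact absurd h hzc
  · obtain rfl : u' = u := parentRel_rightUnique hzu' hp
    exact ⟨hT.parent_mem_of_parent_eq_some hp, hu'c⟩

theorem WF.root_not_mem_descendants (hT : T.WF) (hc : T.parent c = some T.root) :
    T.root ∉ T.descendants c :=
  fun h => hT.ne_root_of_parent_eq_some hc (hT.eq_root_of_isAncestor_root h.2)

theorem WF.exists_child_isAncestor (hT : T.WF) (hw : w ∈ T.supp) (hr : w ≠ T.root) :
    ∃ c, T.parent c = some T.root ∧ T.isAncestor c w := by
  rcases ReflTransGen.cases_tail (hT.root_isAncestor hw) with h | ⟨c, hwc, hc⟩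
  · exact absurd h.symm hr
  · exact ⟨c, hc, hwc⟩

theorem WF.mem_descendants_of_isAncestor (hT : T.WF) (hc : T.parent c = some T.root)
    (hb : b ∈ T.descendants c) (hub : T.isAncestor u b) (hu : u ≠ T.root) :
    u ∈ T.descendants c := by
  refine ⟨hT.mem_of_isAncestor hb.1 hub, ?_⟩
  rcases isAncestor_total hb.2 hub with h | h
  · exact h
  rcases ReflTransGen.cases_head h with rfl | ⟨r, hcr, hru⟩
  · exact ReflTransGen.refl
  · obtain rfl : r = T.root := parentRel_rightUnique hcr hc
    exact absurd (hT.eq_root_of_isAncestor_root hru) hu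

theorem subtreeAt_parent_eq_some : (T.subtreeAt c).parent w = some u ↔
    w ≠ c ∧ w ∈ T.descendants c ∧ T.parent w = some u := by
  simp only [subtreeAt]
  split_ifs <;> simp_all

theorem WF.isAncestor_subtreeAt_iff (hT : T.WF) (hw : w ∈ T.descendants c) :
    (T.subtreeAt c).isAncestor u w ↔ T.isAncestor c u ∧ T.isAncestor u w := by
  constructor
  · intro h
    induction h with
    | refl => exact ⟨hw.2, ReflTransGen.refl⟩
    | tail _ hpar ih =>
      obtain ⟨hmc, hm, hpar⟩ := subtreeAt_parent_eq_some.1 hpar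
      exact ⟨(hT.mem_descendants_of_parent_eq_some hm hmc hpar).2, ReflTransGen.tail ih.2 hpar⟩
  · rintro ⟨hcu, huw⟩
    induction huw using ReflTransGen.head_induction_on with
    | refl => exact ReflTransGen.refl
    | @head w w' hww' hw'u ih =>
      by_cases hwc : w = c
      · subst hwc
        obtain rfl := hT.isAncestor_antisymm hw.1 (ReflTransGen.head hww' hw'u) hcu
        exact ReflTransGen.refl
      · have hw' := hT.mem_descendants_of_parent_eq_some hw hwc hww'
        exact ReflTransGen.head (subtreeAt_parent_eq_some.2 ⟨hwc, hw, hww'⟩) (ih hw')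

theorem WF.descendants_subtreeAt (hT : T.WF) (hw : w ∈ T.descendants c) :
    (T.subtreeAt c).descendants w = T.descendants w := by
  ext z
  constructor
  · rintro ⟨hz, hwz⟩
    exact ⟨hz.1, ((hT.isAncestor_subtreeAt_iff hz).1 hwz).2⟩
  · rintro ⟨hz, hwz⟩
    have hz' : z ∈ T.descendants c := ⟨hz, hw.2.trans hwz⟩
    exact ⟨hz', (hT.isAncestor_subtreeAt_iff hz').2 ⟨hw.2, hwz⟩⟩

theorem WF.subtreeAt (hT : T.WF) (hc : c ∈ T.supp) : (T.subtreeAt c).WF := by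
  refine ⟨⟨hc, ReflTransGen.refl⟩, by simp [RTree.subtreeAt], ?_, ?_, ?_⟩
  · intro z hz
    simp [RTree.subtreeAt, show z ∉ T.descendants c from hz]
  · intro z (hz : z ∈ T.descendants c) (hzc : z ≠ c)
    have hzr : z ≠ T.root := by
      rintro rfl
      exact hzc (hT.eq_root_of_isAncestor_root hz.2).symm
    obtain ⟨u, -, hzu⟩ := hT.exists_parent hz.1 hzr
    exact ⟨u, hT.mem_descendants_of_parent_eq_some hz hzc hzu,
      subtreeAt_parent_eq_some.2 ⟨hzc, hz, hzu⟩⟩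
  · intro z (hz : z ∈ T.descendants c)
    exact (hT.isAncestor_subtreeAt_iff hz).2 ⟨ReflTransGen.refl, hz.2⟩

end RTree

section ReachWithin

variable {G : SimpleGraph V} {s t : Set V} {a b : V}

theorem reachWithin_mono (hst : s ⊆ t) (h : reachWithin G s a b) : reachWithin G t a b :=
  ReflTransGen.mono (fun _ _ h => ⟨hst h.1, hst h.2.1, h.2.2⟩) _ _ h

theorem reachWithin_symm (h : reachWithin G s a b) : reachWithin G s b a :=
  ReflTransGen.mono (fun _ _ h => ⟨h.2.1, h.1, h.2.2.symm⟩) _ _ (ReflTransGen.swap _ _ h)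

end ReachWithin

def PreconnectedOn (G : SimpleGraph V) (s : Set V) : Prop :=
  ∀ a ∈ s, ∀ b ∈ s, reachWithin G s a b

theorem PreconnectedOn.of_subset_insert {G : SimpleGraph V} {s t : Set V} {x : V}
    (hs : PreconnectedOn G s) (hst : s ⊆ t) (hts : t ⊆ insert x s)
    (hx : x ∈ t → ∃ y ∈ s, G.Adj x y) : PreconnectedOn G t := by
  have hreach : ∀ p ∈ t, ∃ p' ∈ s, reachWithin G t p p' := by
    intro p hp
    rcases hts hp with rfl | hps
    · obtain ⟨y, hy, hpy⟩ := hx hp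
      exact ⟨y, hy, ReflTransGen.single ⟨hp, hst hy, hpy⟩⟩
    · exact ⟨p, hps, ReflTransGen.refl⟩
  intro p hp q hq
  obtain ⟨p', hp', hpp'⟩ := hreach p hp
  obtain ⟨q', hq', hqq'⟩ := hreach q hq
  exact hpp'.trans ((reachWithin_mono hst (hs p' hp' q' hq')).trans (reachWithin_symm hqq'))

namespace RTree

variable {G : SimpleGraph V} {T : RTree V} {c : V}

def SubtreesPreconnected (G : SimpleGraph V) (T : RTree V) : Prop :=
  ∀ w ∈ T.supp, PreconnectedOn G (T.descendants w)

def EdgesComparable (G : SimpleGraph V) (T : RTree V) : Prop :=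
  ∀ a ∈ T.supp, ∀ b ∈ T.supp, G.Adj a b → T.isAncestor a b ∨ T.isAncestor b a

theorem WF.subtreesPreconnected_subtreeAt (hT : T.WF) (h : T.SubtreesPreconnected G) :
    (T.subtreeAt c).SubtreesPreconnected G := by
  intro w (hw : w ∈ T.descendants c)
  rw [hT.descendants_subtreeAt hw]
  exact h w hw.1

theorem WF.edgesComparable_subtreeAt (hT : T.WF) (h : T.EdgesComparable G) :
    (T.subtreeAt c).EdgesComparable G := by
  intro p (hp : p ∈ T.descendants c) q (hq : q ∈ T.descendants c) hpq
  rcases h p hp.1 q hq.1 hpq with h | h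
  · exact Or.inl ((hT.isAncestor_subtreeAt_iff hq).2 ⟨hp.2, h⟩)
  · exact Or.inr ((hT.isAncestor_subtreeAt_iff hp).2 ⟨hq.2, h⟩)

theorem WF.mem_descendants_iff_reachWithin (hT : T.WF) (hconn : T.SubtreesPreconnected G)
    (hcomp : T.EdgesComparable G) (hc : T.parent c = some T.root) (w : V) :
    w ∈ T.descendants c ↔
      w ∈ T.supp ∧ w ≠ T.root ∧ reachWithin G (T.supp \ {T.root}) c w := by
  have hcs := hT.mem_of_parent_eq_some hc
  have hsub : T.descendants c ⊆ T.supp \ {T.root} := fun z hz =>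
    ⟨hz.1, fun h => hT.root_not_mem_descendants hc (Set.mem_singleton_iff.1 h ▸ hz)⟩
  constructor
  · intro hw
    exact ⟨hw.1, (hsub hw).2, reachWithin_mono hsub (hconn c hcs c ⟨hcs, .refl⟩ w hw)⟩
  · rintro ⟨-, -, hreach⟩
    induction hreach with
    | refl => exact ⟨hcs, .refl⟩
    | tail _ hstep ih =>
      obtain ⟨⟨hb, -⟩, ⟨hw, hwr⟩, hbw⟩ := hstep
      rcases hcomp _ hb _ hw hbw with h | h
      · exact ⟨hw, ih.2.trans h⟩
      · exact hT.mem_descendants_of_isAncestor hc ih h hwr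

theorem WF.ncard_descendants_lt [Finite V] (hT : T.WF) (hc : T.parent c = some T.root) :
    (T.descendants c).ncard < T.supp.ncard :=
  Set.ncard_lt_ncard ((Set.ssubset_iff_of_subset fun _ hz => hz.1).2
    ⟨T.root, hT.root_mem, hT.root_not_mem_descendants hc⟩) (Set.toFinite _)

end RTree

section SearchTreeCharacterization

variable {G : SimpleGraph V} {T : RTree V}

theorem isSearchTreeRec_of_wf [Finite V] (hT : T.WF) (hconn : T.SubtreesPreconnected G)
    (hcomp : T.EdgesComparable G) : IsSearchTreeRec G T := by
  induction hn : T.supp.ncard using Nat.strong_induction_on generalizing T with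
  | _ n ih =>
    refine .intro T hT ?_ (fun c => hT.mem_descendants_iff_reachWithin hconn hcomp) fun c hc => ?_
    · have h := hconn T.root hT.root_mem
      rwa [hT.descendants_root] at h
    · exact ih _ (hn ▸ hT.ncard_descendants_lt hc)
        (hT.subtreeAt (hT.mem_of_parent_eq_some hc)) (hT.subtreesPreconnected_subtreeAt hconn)
        (hT.edgesComparable_subtreeAt hcomp) rfl

theorem IsSearchTreeRec.wf (h : IsSearchTreeRec G T) : T.WF := by
  cases h with
  | intro _ hwf _ _ _ => exact hwf

theorem IsSearchTreeRec.subtreesPreconnected (h : IsSearchTreeRec G T) :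
    T.SubtreesPreconnected G := by
  induction h with
  | intro T hT hconn _ _ ih =>
    intro w hw
    by_cases hwr : w = T.root
    · subst hwr
      rw [hT.descendants_root]
      exact hconn
    · obtain ⟨c, hc, hcw⟩ := hT.exists_child_isAncestor hw hwr
      have hw' : w ∈ T.descendants c := ⟨hw, hcw⟩
      rw [← hT.descendants_subtreeAt hw']
      exact ih c hc w hw'

theorem IsSearchTreeRec.edgesComparable (h : IsSearchTreeRec G T) : T.EdgesComparable G := by
  induction h with
  | intro T hT _ hcomp _ ih =>
    intro p hp q hq hpq
    by_cases hpr : p = T.root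
    · exact Or.inl (hpr ▸ hT.root_isAncestor hq)
    by_cases hqr : q = T.root
    · exact Or.inr (hqr ▸ hT.root_isAncestor hp)
    obtain ⟨c, hc, hcp⟩ := hT.exists_child_isAncestor hp hpr
    have hp' : p ∈ T.descendants c := ⟨hp, hcp⟩
    have hq' : q ∈ T.descendants c := (hcomp c hc q).2 ⟨hq, hqr,
      ReflTransGen.tail ((hcomp c hc p).1 hp').2.2 ⟨⟨hp, hpr⟩, ⟨hq, hqr⟩, hpq⟩⟩
    rcases ih c hc p hp' q hq' hpq with h | h
    · exact Or.inl ((hT.isAncestor_subtreeAt_iff hq').1 h).2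
    · exact Or.inr ((hT.isAncestor_subtreeAt_iff hp').1 h).2

end SearchTreeCharacterization

namespace RTree

noncomputable def insertAbove (T : RTree V) (x a : V) : RTree V where
  supp := insert x T.supp
  root := if a = T.root then x else T.root
  parent w := if w = x then T.parent a else if w = a then some x else T.parent w

section InsertAbove

variable {G : SimpleGraph V} {T : RTree V} {x a u w z v : V}

theorem parent_insertAbove_of_mem (hx : x ∉ T.supp) (hw : w ∈ T.supp) (hwa : w ≠ a) :
    (T.insertAbove x a).parent w = T.parent w := by
  simp [insertAbove, ne_of_mem_of_not_mem hw hx, hwa]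

theorem parent_insertAbove_self (hax : a ≠ x) : (T.insertAbove x a).parent a = some x := by
  simp [insertAbove, hax]

theorem isAncestor_insertAbove_of_isAncestor (hT : T.WF) (hx : x ∉ T.supp)
    (h : T.isAncestor u w) :
    (T.insertAbove x a).isAncestor u w := by
  refine ReflTransGen.lift' id (fun p q (hpq : T.parent p = some q) => ?_) _ _ h
  have hp := hT.mem_of_parent_eq_some hpq
  by_cases hpa : p = a
  · subst hpa
    refine ReflTransGen.head (parent_insertAbove_self (ne_of_mem_of_not_mem hp hx))
      (ReflTransGen.single ?_)
    show (T.insertAbove x p).parent x = some q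
    simpa [insertAbove] using hpq
  · exact ReflTransGen.single ((parent_insertAbove_of_mem hx hp hpa).trans hpq)

theorem isAncestor_of_isAncestor_insertAbove (hT : T.WF) (hx : x ∉ T.supp)
    (h : (T.insertAbove x a).isAncestor u w) :
    T.isAncestor (if u = x then a else u) (if w = x then a else w) := by
  refine ReflTransGen.lift' (fun w => if w = x then a else w)
    (fun p q (hpq : (T.insertAbove x a).parent p = some q) => ?_) _ _ h
  simp only [insertAbove] at hpq
  split_ifs at hpq with hpx hpa
  all_goals show ReflTransGen T.parentRel (if p = x then a else p) (if q = x then a else q)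
  · rw [if_pos hpx, if_neg (ne_of_mem_of_not_mem (hT.parent_mem_of_parent_eq_some hpq) hx)]
    exact ReflTransGen.single hpq
  · obtain rfl := Option.some_inj.1 hpq
    rw [if_neg hpx, if_pos rfl, hpa]
  · rw [if_neg hpx, if_neg (ne_of_mem_of_not_mem (hT.parent_mem_of_parent_eq_some hpq) hx)]
    exact ReflTransGen.single hpq

theorem isAncestor_insertAbove_self_left (hT : T.WF) (hx : x ∉ T.supp) (ha : a ∈ T.supp)
    (h : T.isAncestor a z) :
    (T.insertAbove x a).isAncestor x z :=
  (isAncestor_of_parent_eq_some (parent_insertAbove_self (ne_of_mem_of_not_mem ha hx))).trans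
    (isAncestor_insertAbove_of_isAncestor hT hx h)

theorem isAncestor_insertAbove_self_right (hT : T.WF) (hx : x ∉ T.supp) (h : T.isAncestor z a)
    (hza : z ≠ a) :
    (T.insertAbove x a).isAncestor z x := by
  rcases ReflTransGen.cases_head h with h | ⟨b, hab, hbz⟩
  · exact absurd h.symm hza
  · refine (isAncestor_insertAbove_of_isAncestor hT hx hbz).trans
      (isAncestor_of_parent_eq_some ?_)
    show (T.insertAbove x a).parent x = some b
    simp only [insertAbove, if_true]
    exact hab

theorem WF.insertAbove (hT : T.WF) (hx : x ∉ T.supp) (ha : a ∈ T.supp) :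
    (T.insertAbove x a).WF := by
  have hax := ne_of_mem_of_not_mem ha hx
  have hrx := ne_of_mem_of_not_mem hT.root_mem hx
  refine ⟨?_, ?_, ?_, ?_, ?_⟩
  · by_cases har : a = T.root <;> simp [RTree.insertAbove, har, hT.root_mem]
  · by_cases har : a = T.root
    · simp [RTree.insertAbove, har, hT.parent_root]
    · simp [RTree.insertAbove, har, hrx, Ne.symm har, hT.parent_root]
  · intro z hz
    simp only [RTree.insertAbove, Set.mem_insert_iff, not_or] at hz ⊢
    rw [if_neg hz.1, if_neg (ne_of_mem_of_not_mem ha hz.2).symm, hT.parent_eq_none hz.2]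
  · intro z hz hzr
    simp only [RTree.insertAbove, Set.mem_insert_iff] at hz hzr ⊢
    by_cases hzx : z = x
    · subst hzx
      have har : a ≠ T.root := fun h => hzr (if_pos h).symm
      obtain ⟨b, hb, hab⟩ := hT.exists_parent ha har
      exact ⟨b, Or.inr hb, by simp [hab]⟩
    by_cases hza : z = a
    · exact ⟨x, Or.inl rfl, by simp [hza, hax]⟩
    have hzs := hz.resolve_left hzx
    have hzr' : z ≠ T.root := by
      split_ifs at hzr with har
      · exact har ▸ hza
      · exact hzr
    obtain ⟨b, hb, hzb⟩ := hT.exists_parent hzs hzr'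
    exact ⟨b, Or.inr hb, by simp [hzx, hza, hzb]⟩
  · rintro z (rfl | hz)
    · by_cases har : a = T.root
      · simp only [RTree.insertAbove, if_pos har]
        exact ReflTransGen.refl
      · simp only [RTree.insertAbove, if_neg har]
        exact isAncestor_insertAbove_self_right hT hx (hT.root_isAncestor ha) (Ne.symm har)
    · by_cases har : a = T.root
      · simp only [RTree.insertAbove, if_pos har]
        exact isAncestor_insertAbove_self_left hT hx ha (har ▸ hT.root_isAncestor hz)
      · simp only [RTree.insertAbove, if_neg har]
        exact isAncestor_insertAbove_of_isAncestor hT hx (hT.root_isAncestor hz)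

theorem descendants_subset_descendants_insertAbove (hT : T.WF) (hx : x ∉ T.supp)
    (ha : a ∈ T.supp) :
    T.descendants (if w = x then a else w) ⊆ (T.insertAbove x a).descendants w := by
  rintro z ⟨hz, hwz⟩
  refine ⟨Set.mem_insert_of_mem _ hz, ?_⟩
  split_ifs at hwz with hwx
  · rw [hwx]
    exact isAncestor_insertAbove_self_left hT hx ha hwz
  · exact isAncestor_insertAbove_of_isAncestor hT hx hwz

theorem descendants_insertAbove_subset (hT : T.WF) (hx : x ∉ T.supp) :
    (T.insertAbove x a).descendants w ⊆ insert x (T.descendants (if w = x then a else w)) := by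
  rintro z ⟨hz, hwz⟩
  by_cases hzx : z = x
  · exact Or.inl hzx
  · exact Or.inr ⟨hz.resolve_left hzx,
      by simpa [hzx] using isAncestor_of_isAncestor_insertAbove hT hx hwz⟩

theorem SubtreesPreconnected.insertAbove (h : T.SubtreesPreconnected G) (hT : T.WF)
    (hx : x ∉ T.supp) (hv : v ∈ T.supp) (hav : T.isAncestor a v) (hxv : G.Adj x v) :
    (T.insertAbove x a).SubtreesPreconnected G := by
  have ha := hT.mem_of_isAncestor hv hav
  intro w hw
  have hsub := descendants_insertAbove_subset (a := a) (w := w) hT hx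
  have hw₀ : (if w = x then a else w) ∈ T.supp := by
    split_ifs with hwx
    · exact ha
    · exact hw.resolve_left hwx
  refine (h _ hw₀).of_subset_insert (descendants_subset_descendants_insertAbove hT hx ha) hsub
    fun hxw => ⟨v, ?_, hxv⟩
  have hvw : v ∈ (T.insertAbove x a).descendants w :=
    ⟨Or.inr hv, hxw.2.trans (isAncestor_insertAbove_self_left hT hx ha hav)⟩
  exact (hsub hvw).resolve_left (ne_of_mem_of_not_mem hv hx)

theorem EdgesComparable.insertAbove (h : T.EdgesComparable G) (hT : T.WF) (hx : x ∉ T.supp)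
    (hv : v ∈ T.supp) (hav : T.isAncestor a v) (hN : ∀ z, G.Adj x z → z = v ∨ G.Adj v z) :
    (T.insertAbove x a).EdgesComparable G := by
  have ha := hT.mem_of_isAncestor hv hav
  have hxv := isAncestor_insertAbove_self_left hT hx ha hav
  have hx_comp : ∀ z ∈ T.supp, G.Adj x z →
      (T.insertAbove x a).isAncestor x z ∨ (T.insertAbove x a).isAncestor z x := by
    intro z hz hxz
    rcases hN z hxz with rfl | hvz
    · exact Or.inl hxv
    rcases h v hv z hz hvz with hvz | hzv
    · exact Or.inl (hxv.trans (isAncestor_insertAbove_of_isAncestor hT hx hvz))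
    rcases isAncestor_total hzv hav with hza | haz
    · by_cases hza' : z = a
      · exact Or.inl (isAncestor_insertAbove_self_left hT hx ha (hza' ▸ .refl))
      · exact Or.inr (isAncestor_insertAbove_self_right hT hx hza hza')
    · exact Or.inl (isAncestor_insertAbove_self_left hT hx ha haz)
  rintro p (rfl | hp) q (rfl | hq) hpq
  · exact absurd rfl hpq.ne
  · exact hx_comp q hq hpq
  · exact (hx_comp p hp hpq.symm).symm
  · exact (h p hp q hq hpq).imp (isAncestor_insertAbove_of_isAncestor hT hx)
      (isAncestor_insertAbove_of_isAncestor hT hx)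

theorem WF.insertAt_eq_insertAbove (hT : T.WF) (hv : v ∈ T.supp) {i : ℕ}
    (hi : i ≤ T.depthOf v) : T.insertAt i x v = T.insertAbove x (T.ancAt v i) := by
  rcases Nat.eq_zero_or_pos i with rfl | hi₀
  · simp [insertAt, RTree.insertAbove, hT.ancAt_zero hv, hT.parent_root]
  · have hp := hT.parent_ancAt hv hi₀.ne' hi
    have hid : i ≠ T.depthOf v + 1 := by omega
    simp only [insertAt, if_neg hi₀.ne', if_neg hid]
    simp [RTree.insertAbove, hT.ne_root_of_parent_eq_some hp, hp]

end InsertAbove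

end RTree

theorem insertAt_isSearchTree_general {V : Type u} [Fintype V] (G' : SimpleGraph V)
    (x v : V) (hxv : x ≠ v)
    (hN : ∀ z : V, (z = x ∨ G'.Adj x z) → (z = v ∨ G'.Adj v z))
    (T : RTree V) (hT : IsSearchTreeOn G' {x}ᶜ T) (i : ℕ) (hi : i ≤ T.depthOf v) :
    IsSearchTree G' (T.insertAt i x v) := by
  obtain ⟨hsupp, hrec⟩ := hT
  have hwf := hrec.wf
  have hx : x ∉ T.supp := by simp [hsupp]
  have hv : v ∈ T.supp := by simpa [hsupp] using hxv.symm
  have hxv' : G'.Adj x v := ((hN x (Or.inl rfl)).resolve_left hxv).symm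
  have hav := hwf.isAncestor_ancAt hv hi
  rw [hwf.insertAt_eq_insertAbove hv hi]
  refine ⟨?_, isSearchTreeRec_of_wf (hwf.insertAbove hx (hwf.mem_of_isAncestor hv hav))
    (hrec.subtreesPreconnected.insertAbove hwf hx hv hav hxv')
    (hrec.edgesComparable.insertAbove hwf hx hv hav fun z hz => hN z (Or.inr hz))⟩
  show insert x T.supp = Set.univ
  rw [hsupp, Set.insert_eq, Set.union_compl_self]

/-- if `N[x] ⊆ N[v]` and `T` is a search tree on `G' − x`, then for every
`0 ≤ i ≤ d_{T,v}` the insertion `T(i,x,v)` is a search tree on `G'`. -/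
theorem insertAt_isSearchTree {V : Type u} [Fintype V] (G' : SimpleGraph V)
    (hG' : G'.Connected) (x v : V) (hxv : x ≠ v)
    (hN : ∀ z : V, (z = x ∨ G'.Adj x z) → (z = v ∨ G'.Adj v z))
    (T : RTree V) (hT : IsSearchTreeOn G' {x}ᶜ T) (i : ℕ) (hi : i ≤ T.depthOf v) :
    IsSearchTree G' (T.insertAt i x v) :=
  insertAt_isSearchTree_general G' x v hxv hN T hT i hi
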